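/- Let L : ℕ → ℝ be packet lengths with L(j) > 0 and Σ_j L(j) = ∞, inducing packet operator 𝒫(x) = max{n : Σ_{j=1}^n L(j) ≤ x} and data operator 𝒫⁻(n) = Σ_{j=1}^n L(j). Let Π : ℝ≥0 → ℝ be a maximum packet curve for 𝒫, and define Π⁻(r) = inf{d ≥ 0 : Π(d) ≥ r}. Let P, P̄ : ℕ → ℕ be nondecreasing packet flows with P̄ ≤ P, and suppose ω' : ℕ → ℝ≥0 is a minimum service curve for P, i.e. for every t, P̄(t) ≥ min_{0 ≤ s ≤ t}( P(s) + ω'(t − s) ). Define the data flows A(s) = 𝒫⁻(P(s)) and Ā(t) = 𝒫⁻(P̄(t)). Then for every t, Ā(t) ≥ min_{0 ≤ s ≤ t}( A(s) + Π⁻(ω'(t − s)) ); i.e., Π⁻ ∘ ω' is a minimum service curve for the data flow A. -/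

import Mathlib

open Filter

/- Choose the instant `s` at which the packet-level service bound is attained, so that
`P s + ω'(t - s) ≤ P̄ t`. Packet boundaries are fixed points of `𝒫 ∘ 𝒫⁻`, so the maximum packet
curve applied between the data amounts `𝒫⁻(P s)` and `𝒫⁻(P̄ t)` gives
`ω'(t - s) ≤ P̄ t - P s ≤ Π(𝒫⁻(P̄ t) - 𝒫⁻(P s))`: this data gap is admissible in the infimum
defining `Π⁻(ω'(t - s))`. -/

/-- Cumulative length of the first `n` packets: `𝒫⁻(n) = Σ_{j=1}^n L j`. -/
noncomputable def cumLen (L : ℕ → ℝ) (n : ℕ) : ℝ := ∑ j ∈ Finset.range n, L j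

/-- The packet operator `𝒫(x) = max {n : Σ_{j=1}^n L j ≤ x}`. -/
noncomputable def packOp (L : ℕ → ℝ) (x : ℝ) : ℕ := sSup {n : ℕ | cumLen L n ≤ x}

section PacketOperator

variable {L : ℕ → ℝ}

lemma cumLen_nonneg (hL : ∀ j, 0 < L j) (n : ℕ) : 0 ≤ cumLen L n :=
  Finset.sum_nonneg fun j _ => (hL j).le

lemma cumLen_strictMono (hL : ∀ j, 0 < L j) : StrictMono (cumLen L) :=
  strictMono_nat_of_lt_succ fun n => by
    simpa only [cumLen, Finset.sum_range_succ] using lt_add_of_pos_right _ (hL n)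

lemma packOp_cumLen (hL : ∀ j, 0 < L j) (m : ℕ) : packOp L (cumLen L m) = m := by
  have h : {n : ℕ | cumLen L n ≤ cumLen L m} = Set.Iic m := by
    ext n
    simp [(cumLen_strictMono hL).le_iff_le]
  simp [packOp, h, csSup_Iic]

lemma sInf_nonneg_le_of_le_apply {f : ℝ → ℝ} {r d : ℝ} (hd : 0 ≤ d) (hr : r ≤ f d) :
    sInf {d : ℝ | 0 ≤ d ∧ r ≤ f d} ≤ d :=
  csInf_le ⟨0, fun _ hx => hx.1⟩ ⟨hd, hr⟩

lemma cumLen_add_sInf_le_of_maxPacketCurve (hL : ∀ j, 0 < L j) {Pmax : ℝ → ℝ}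
    (hPmax : ∀ x y : ℝ, 0 ≤ x → x ≤ y →
      ((packOp L y : ℝ) - (packOp L x : ℝ)) ≤ Pmax (y - x))
    {m n : ℕ} {w : ℝ} (hw : 0 ≤ w) (hmn : (m : ℝ) + w ≤ n) :
    cumLen L m + sInf {d : ℝ | 0 ≤ d ∧ w ≤ Pmax d} ≤ cumLen L n := by
  have hle : cumLen L m ≤ cumLen L n :=
    (cumLen_strictMono hL).monotone (by exact_mod_cast le_of_add_le_of_nonneg_left hmn hw)
  have hcurve := hPmax _ _ (cumLen_nonneg hL m) hle
  rw [packOp_cumLen hL, packOp_cumLen hL] at hcurve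
  have hgap :=
    sInf_nonneg_le_of_le_apply (sub_nonneg.2 hle) ((le_sub_iff_add_le'.2 hmn).trans hcurve)
  linarith

end PacketOperator

theorem stmt_12_general (L : ℕ → ℝ) (hL : ∀ j, 0 < L j)
    (Pmax : ℝ → ℝ)
    (hPmax : ∀ x y : ℝ, 0 ≤ x → x ≤ y →
      ((packOp L y : ℝ) - (packOp L x : ℝ)) ≤ Pmax (y - x))
    (P Pbar : ℕ → ℕ)
    (ω' : ℕ → ℝ) (hω'pos : ∀ d, 0 ≤ ω' d)
    (hserv : ∀ t, (Finset.Iic t).inf' Finset.nonempty_Iic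
        (fun s => (P s : ℝ) + ω' (t - s)) ≤ (Pbar t : ℝ)) :
    ∀ t, (Finset.Iic t).inf' Finset.nonempty_Iic
        (fun s => cumLen L (P s) + sInf {d : ℝ | 0 ≤ d ∧ ω' (t - s) ≤ Pmax d})
      ≤ cumLen L (Pbar t) := by
  intro t
  obtain ⟨s, hs, hmin⟩ := Finset.exists_mem_eq_inf' (Finset.nonempty_Iic (a := t))
    (fun s => (P s : ℝ) + ω' (t - s))
  have hservice : (P s : ℝ) + ω' (t - s) ≤ Pbar t := hmin ▸ hserv t
  exact (Finset.inf'_le _ hs).trans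
    (cumLen_add_sInf_le_of_maxPacketCurve hL hPmax (hω'pos _) hservice)

/-- if `Π` is a maximum packet curve for the packet operator `𝒫`, with
pseudo-inverse `Π⁻(r) = inf {d ≥ 0 : Π d ≥ r}`, and `ω'` is a minimum service curve
for the packet flow `P` with output `P̄`, then `Π⁻ ∘ ω'` is a minimum service curve
for the data flow `A = 𝒫⁻ ∘ P` with output `Ā = 𝒫⁻ ∘ P̄`. -/
theorem stmt_12 (L : ℕ → ℝ) (hL : ∀ j, 0 < L j)
    (hdiv : Tendsto (cumLen L) atTop atTop)
    (Pmax : ℝ → ℝ)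
    (hPmax : ∀ x y : ℝ, 0 ≤ x → x ≤ y →
      ((packOp L y : ℝ) - (packOp L x : ℝ)) ≤ Pmax (y - x))
    (P Pbar : ℕ → ℕ) (hP : Monotone P) (hPbar : Monotone Pbar)
    (hle : ∀ t, Pbar t ≤ P t)
    (ω' : ℕ → ℝ) (hω'pos : ∀ d, 0 ≤ ω' d)
    (hserv : ∀ t, (Finset.Iic t).inf' Finset.nonempty_Iic
        (fun s => (P s : ℝ) + ω' (t - s)) ≤ (Pbar t : ℝ)) :
    ∀ t, (Finset.Iic t).inf' Finset.nonempty_Iic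
        (fun s => cumLen L (P s) + sInf {d : ℝ | 0 ≤ d ∧ ω' (t - s) ≤ Pmax d})
      ≤ cumLen L (Pbar t) :=
  stmt_12_general L hL Pmax hPmax P Pbar ω' hω'pos hserv
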